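/- Nonnegativity of arbitragable profit: if the initial state s0 = (x0, y0) with y0 = F_y(x0) satisfies r(x0) = p_x/p_y, then AP(s0, TX) ≥ 0 for every transaction TX (of either type Sell(X,q) or Sell(Y,q) with q ≥ 0). -/
import Mathlib


/-- A transaction in the two-token CFMM: sell `q` units of token X or of token Y. -/
inductive Tx where
  | sellX (q : ℝ)
  | sellY (q : ℝ)

/-- The amount of tokens sold by a transaction. -/
def Tx.amount : Tx → ℝ
  | sellX q => q
  | sellY q => q

/-- Arbitragable profit of a transaction at the initial state `(x0, Fy x0)`:
for `Sell(X,q)`, with `x′ = max (x0+(1−f)q) R_x`,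
`AP = (x′ − R_x)·p_x − ((F_y(R_x) − F_y(x′))/(1−f))·p_y`;
for `Sell(Y,q)`, with `x′ = min (F_x(F_y(x0)+(1−f)q)) L_x`,
`AP = (F_y(x′) − F_y(L_x))·p_y − ((L_x − x′)/(1−f))·p_x`. -/
noncomputable def AP (Fy Fx : ℝ → ℝ) (f px py Lx Rx x0 : ℝ) : Tx → ℝ
  | Tx.sellX q =>
      (max (x0 + (1 - f) * q) Rx - Rx) * px -
        ((Fy Rx - Fy (max (x0 + (1 - f) * q) Rx)) / (1 - f)) * py
  | Tx.sellY q =>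
      (Fy (min (Fx (Fy x0 + (1 - f) * q)) Lx) - Fy Lx) * py -
        ((Lx - min (Fx (Fy x0 + (1 - f) * q)) Lx) / (1 - f)) * px

lemma mvt_bounds (Fy : ℝ → ℝ)
    (hdiff : ∀ x ∈ Set.Ioi (0:ℝ), DifferentiableAt ℝ Fy x)
    (hanti : StrictAntiOn (fun x => -deriv Fy x) (Set.Ioi 0))
    {a b : ℝ} (ha : 0 < a) (hab : a ≤ b) :
    deriv Fy a * (b - a) ≤ Fy b - Fy a ∧ Fy b - Fy a ≤ deriv Fy b * (b - a) := by
  rcases eq_or_lt_of_le hab with h | h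
  · subst h; simp
  · have hb : 0 < b := ha.trans h
    obtain ⟨c, hc, hcd⟩ := exists_deriv_eq_slope Fy h
      (fun x hx => (hdiff x (lt_of_lt_of_le ha hx.1)).continuousAt.continuousWithinAt)
      (fun x hx => (hdiff x (ha.trans hx.1)).differentiableWithinAt)
    have hceq : deriv Fy c * (b - a) = Fy b - Fy a := by
      rw [hcd, div_mul_cancel₀ _ (sub_ne_zero.2 h.ne')]
    have h1 : deriv Fy a < deriv Fy c := by
      have := hanti (Set.mem_Ioi.2 ha) (Set.mem_Ioi.2 (ha.trans hc.1)) hc.1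
      simpa using this
    have h2 : deriv Fy c < deriv Fy b := by
      have := hanti (Set.mem_Ioi.2 (ha.trans hc.1)) (Set.mem_Ioi.2 hb) hc.2
      simpa using this
    constructor <;> nlinarith

/-- **nonnegativity of arbitragable profit.**
If the initial state `s0 = (x0, y0)` with `y0 = F_y(x0)` satisfies `r(x0) = p_x/p_y`,
then `AP(s0, TX) ≥ 0` for every transaction `TX` (of either type, with amount `q ≥ 0`).

The CFMM is given by a differentiable, strictly decreasing reserve curve `Fy` on `(0,∞)`,
with marginal exchange rate `r x = −Fy′ x` positive and strictly decreasing there, and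
`Fx` the inverse function of `Fy`; `p_x, p_y > 0`, `f ∈ [0,1)`, `L_x` is the unique point
with `r L_x = (1/(1−f))·(p_x/p_y)` and `R_x` the unique point with
`r R_x = (1−f)·(p_x/p_y)`. -/
theorem AP_nonneg
    (Fy Fx : ℝ → ℝ) (f px py Lx Rx x0 : ℝ)
    (hf0 : 0 ≤ f) (hf1 : f < 1)
    (hpx : 0 < px) (hpy : 0 < py)
    (hFy_diff : ∀ x ∈ Set.Ioi (0 : ℝ), DifferentiableAt ℝ Fy x)
    (hFy_anti : StrictAntiOn Fy (Set.Ioi 0))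
    (hr_pos : ∀ x ∈ Set.Ioi (0 : ℝ), 0 < -deriv Fy x)
    (hr_anti : StrictAntiOn (fun x => -deriv Fy x) (Set.Ioi 0))
    (hFx_inv : Set.InvOn Fx Fy (Set.Ioi 0) (Fy '' Set.Ioi 0))
    (hFx_pos : ∀ y, Fy x0 ≤ y → 0 < Fx y)
    (hLx_pos : 0 < Lx) (hLx : -deriv Fy Lx = (1 / (1 - f)) * (px / py))
    (hRx_pos : 0 < Rx) (hRx : -deriv Fy Rx = (1 - f) * (px / py))
    (hx0_pos : 0 < x0) (hx0 : -deriv Fy x0 = px / py) :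
    ∀ tx : Tx, 0 ≤ tx.amount → 0 ≤ AP Fy Fx f px py Lx Rx x0 tx := by
  have hf : (0:ℝ) < 1 - f := by linarith
  rintro (q | q) hq <;> simp only [Tx.amount] at hq
  · -- sell X
    simp only [AP]
    set x' := max (x0 + (1 - f) * q) Rx with hx'
    have hRle : Rx ≤ x' := le_max_right _ _
    have h := (mvt_bounds Fy hFy_diff hr_anti hRx_pos hRle).1
    have hdR : deriv Fy Rx = -((1 - f) * (px / py)) := by linarith
    rw [hdR] at h
    rw [div_mul_eq_mul_div, sub_nonneg, div_le_iff₀ hf]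
    have hppy : (Fy Rx - Fy x') ≤ (1 - f) * (px / py) * (x' - Rx) := by linarith
    calc (Fy Rx - Fy x') * py ≤ (1 - f) * (px / py) * (x' - Rx) * py := by nlinarith
      _ = (x' - Rx) * px * (1 - f) := by field_simp
  · -- sell Y
    simp only [AP]
    set x' := min (Fx (Fy x0 + (1 - f) * q)) Lx with hx'
    have hx'pos : 0 < x' := lt_min (hFx_pos _ (by nlinarith [mul_nonneg hf.le hq])) hLx_pos
    have hle : x' ≤ Lx := min_le_right _ _
    have h := (mvt_bounds Fy hFy_diff hr_anti hx'pos hle).2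
    have hdL : deriv Fy Lx = -((1 / (1 - f)) * (px / py)) := by linarith
    rw [hdL] at h
    -- Fy Lx - Fy x' ≤ -(1/(1-f))(px/py)(Lx - x')  → Fy x' - Fy Lx ≥ (1/(1-f))(px/py)(Lx-x')
    rw [sub_nonneg, div_mul_eq_mul_div, div_le_iff₀ hf]
    have key : (1 / (1 - f)) * (px / py) * (Lx - x') ≤ Fy x' - Fy Lx := by linarith
    calc (Lx - x') * px = (1 / (1 - f)) * (px / py) * (Lx - x') * py * (1 - f) := by
          field_simp
      _ ≤ (Fy x' - Fy Lx) * py * (1 - f) := by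
          have := mul_le_mul_of_nonneg_right (mul_le_mul_of_nonneg_right key hpy.le) hf.le
          linarith
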